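/- Fix a natural number k. Define, for each natural number d, E₁(d) = ∑_{i=0}^{d} (k + i) 2^{−i} ∏_{j=i+1}^{d} (1 − 2^{−j}) and E₂(d) = ∑_{i=0}^{d} (k + i)² 2^{−i} ∏_{j=i+1}^{d} (1 − 2^{−j}). Then lim_{d→∞} ( E₂(d) − E₁(d)² ) = c₀ + c₁, where c₀ = ∑_{i=1}^{∞} 1/(2^i − 1) and c₁ = ∑_{i=1}^{∞} 1/(2^i − 1)². (This is the limiting variance Var[M_n] of the decoding time of a random binary linear code as the blocklength n grows.) -/

import Mathlib

/-!
`E₁` and `E₂` are the first two moments, shifted by `k`, of the law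
`p_d(i) = q^i ∏_{j=i+1}^{d} (1 - q^j)` on `{0, …, d}` with `q = 1/2`; so `E₂ - E₁²` is its
variance and does not depend on `k`. As `d → ∞`, `p_d` converges, dominated by `q^i`, to
`u(i) = q^i ∏_{j>i} (1 - q^j)`, and so do its moments. Since `(1 - q^{i+1}) u(i+1) = q u(i)`, the
tilted laws `z^i u(i) / ∑_j z^j u(j)` satisfy `Var(z) = Var(qz) + e + e²` with `e = qz / (1 - qz)`.
Telescoping along `z = q^t → 0`, where the tilted law concentrates at `0`, gives
`Var(1) = ∑_t (e_t + e_t²)` with `e_t = q^{t+1} / (1 - q^{t+1}) = 1 / (2^{t+1} - 1)`, which is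
`c₀ + c₁`.
-/

open Filter

/-- The Erdős–Borwein constant `c₀ = ∑_{i=1}^{∞} 1/(2^i − 1)`. -/
noncomputable def c₀ : ℝ := ∑' i : ℕ, 1 / ((2 : ℝ) ^ (i + 1) - 1)

/-- The digital search tree constant `c₁ = ∑_{i=1}^{∞} 1/(2^i − 1)²`. -/
noncomputable def c₁ : ℝ := ∑' i : ℕ, 1 / ((2 : ℝ) ^ (i + 1) - 1) ^ 2

/-- First moment `E₁(d) = ∑_{i=0}^{d} (k + i) 2^{−i} ∏_{j=i+1}^{d} (1 − 2^{−j})`. -/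
noncomputable def E₁ (k d : ℕ) : ℝ :=
  ∑ i ∈ Finset.range (d + 1),
    ((k : ℝ) + (i : ℝ)) * (2 : ℝ) ^ (-(i : ℤ)) *
      ∏ j ∈ Finset.Icc (i + 1) d, (1 - (2 : ℝ) ^ (-(j : ℤ)))

/-- Second moment `E₂(d) = ∑_{i=0}^{d} (k + i)² 2^{−i} ∏_{j=i+1}^{d} (1 − 2^{−j})`. -/
noncomputable def E₂ (k d : ℕ) : ℝ :=
  ∑ i ∈ Finset.range (d + 1),
    ((k : ℝ) + (i : ℝ)) ^ 2 * (2 : ℝ) ^ (-(i : ℤ)) *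
      ∏ j ∈ Finset.Icc (i + 1) d, (1 - (2 : ℝ) ^ (-(j : ℤ)))

open Finset Topology

section Products

variable (q : ℝ)

def partialProd (i d : ℕ) : ℝ := ∏ j ∈ Icc (i + 1) d, (1 - q ^ j)

def finiteMass (d i : ℕ) : ℝ := q ^ i * partialProd q i d

noncomputable def tailProd (i : ℕ) : ℝ := ∏' j, (1 - q ^ (i + j + 1))

noncomputable def limitMass (i : ℕ) : ℝ := q ^ i * tailProd q i

variable {q}

lemma partialProd_self (i : ℕ) : partialProd q i i = 1 := by
  simp [partialProd]

lemma partialProd_succ {i d : ℕ} (h : i ≤ d) :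
    partialProd q i (d + 1) = partialProd q i d * (1 - q ^ (d + 1)) :=
  prod_Icc_succ_top (by omega) _

lemma partialProd_add (i n : ℕ) :
    partialProd q i (i + n) = ∏ j ∈ range n, (1 - q ^ (i + j + 1)) := by
  induction n with
  | zero => simp [partialProd_self]
  | succ n ih => rw [← add_assoc, partialProd_succ (by omega), ih, prod_range_succ]

lemma sum_finiteMass (d : ℕ) : ∑ i ∈ range (d + 1), finiteMass q d i = 1 := by
  induction d with
  | zero => simp [finiteMass, partialProd_self]
  | succ d ih =>
    rw [sum_range_succ, finiteMass, partialProd_self, mul_one]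
    calc ∑ i ∈ range (d + 1), finiteMass q (d + 1) i + q ^ (d + 1)
        = (1 - q ^ (d + 1)) * ∑ i ∈ range (d + 1), finiteMass q d i + q ^ (d + 1) := by
          rw [mul_sum]
          refine congrArg (· + _) (sum_congr rfl fun i hi => ?_)
          rw [finiteMass, finiteMass, partialProd_succ (by simpa [Nat.lt_succ_iff] using hi)]
          ring
      _ = 1 := by rw [ih]; ring

variable (hq₀ : 0 ≤ q) (hq₁ : q < 1)
include hq₀ hq₁

lemma one_sub_pow_succ_pos (j : ℕ) : 0 < 1 - q ^ (j + 1) :=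
  sub_pos.2 (pow_lt_one₀ hq₀ hq₁ (Nat.succ_ne_zero j))

lemma partialProd_nonneg (i d : ℕ) : 0 ≤ partialProd q i d :=
  prod_nonneg fun j hj => by
    obtain ⟨j, rfl⟩ := Nat.exists_eq_add_of_lt (mem_Icc.1 hj).1
    exact (one_sub_pow_succ_pos hq₀ hq₁ _).le

lemma partialProd_le_one (i d : ℕ) : partialProd q i d ≤ 1 :=
  prod_le_one (fun j hj => by
    obtain ⟨j, rfl⟩ := Nat.exists_eq_add_of_lt (mem_Icc.1 hj).1
    exact (one_sub_pow_succ_pos hq₀ hq₁ _).le) fun j _ => by linarith [pow_nonneg hq₀ j]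

lemma finiteMass_nonneg (d i : ℕ) : 0 ≤ finiteMass q d i :=
  mul_nonneg (pow_nonneg hq₀ i) (partialProd_nonneg hq₀ hq₁ i d)

lemma finiteMass_le_pow (d i : ℕ) : finiteMass q d i ≤ q ^ i :=
  mul_le_of_le_one_right (pow_nonneg hq₀ i) (partialProd_le_one hq₀ hq₁ i d)

lemma summable_log_one_sub_pow (i : ℕ) :
    Summable fun j => Real.log (1 - q ^ (i + j + 1)) := by
  have hgeom : Summable fun j => -q ^ (i + j + 1) := by
    simpa [pow_succ, pow_add, mul_comm, mul_assoc] using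
      ((summable_geometric_of_lt_one hq₀ hq₁).mul_left (q ^ i * q)).neg
  simpa [sub_eq_add_neg] using Real.summable_log_one_add_of_summable hgeom

lemma multipliable_one_sub_pow (i : ℕ) : Multipliable fun j => 1 - q ^ (i + j + 1) :=
  Real.multipliable_of_summable_log (fun _ => one_sub_pow_succ_pos hq₀ hq₁ _)
    (summable_log_one_sub_pow hq₀ hq₁ i)

lemma tailProd_pos (i : ℕ) : 0 < tailProd q i := by
  rw [tailProd, ← Real.rexp_tsum_eq_tprod (fun _ => one_sub_pow_succ_pos hq₀ hq₁ _)
    (summable_log_one_sub_pow hq₀ hq₁ i)]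
  exact Real.exp_pos _

lemma tendsto_partialProd (i : ℕ) : Tendsto (partialProd q i) atTop (𝓝 (tailProd q i)) := by
  rw [← tendsto_add_atTop_iff_nat i]
  simpa only [add_comm _ i, partialProd_add, tailProd] using
    (multipliable_one_sub_pow hq₀ hq₁ i).hasProd.tendsto_prod_nat

lemma tailProd_le_one (i : ℕ) : tailProd q i ≤ 1 :=
  le_of_tendsto' (tendsto_partialProd hq₀ hq₁ i) (partialProd_le_one hq₀ hq₁ i)

lemma tailProd_eq_mul_succ (i : ℕ) : tailProd q i = (1 - q ^ (i + 1)) * tailProd q (i + 1) := by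
  have hshift : (fun j => 1 - q ^ (i + (j + 1) + 1)) = fun j => 1 - q ^ (i + 1 + j + 1) := by
    funext j; ring_nf
  have hmul : Multipliable fun j => 1 - q ^ (i + (j + 1) + 1) := by
    rw [hshift]; exact multipliable_one_sub_pow hq₀ hq₁ (i + 1)
  rw [tailProd, tailProd, tprod_eq_zero_mul' (f := fun j => 1 - q ^ (i + j + 1)) hmul, hshift,
    add_zero]

lemma limitMass_nonneg (i : ℕ) : 0 ≤ limitMass q i :=
  mul_nonneg (pow_nonneg hq₀ i) (tailProd_pos hq₀ hq₁ i).le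

lemma limitMass_le_pow (i : ℕ) : limitMass q i ≤ q ^ i :=
  mul_le_of_le_one_right (pow_nonneg hq₀ i) (tailProd_le_one hq₀ hq₁ i)

lemma limitMass_zero_pos : 0 < limitMass q 0 := by
  simpa [limitMass] using tailProd_pos hq₀ hq₁ 0

lemma mul_limitMass (i : ℕ) : q * limitMass q i = (1 - q ^ (i + 1)) * limitMass q (i + 1) := by
  rw [limitMass, limitMass, tailProd_eq_mul_succ hq₀ hq₁ i]
  ring

end Products

section Moments

variable (q : ℝ)

def finiteMoment (r d : ℕ) : ℝ := ∑ i ∈ range (d + 1), (i : ℝ) ^ r * finiteMass q d i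

noncomputable def tiltedMoment (r : ℕ) (z : ℝ) : ℝ := ∑' j : ℕ, (j : ℝ) ^ r * z ^ j * limitMass q j

variable {q} {z : ℝ}
variable (hq₀ : 0 ≤ q) (hq₁ : q < 1)
include hq₀ hq₁

lemma summable_pow_mul_pow (r : ℕ) : Summable fun i : ℕ => (i : ℝ) ^ r * q ^ i :=
  summable_pow_mul_geometric_of_norm_lt_one r (by rwa [Real.norm_eq_abs, abs_of_nonneg hq₀])

lemma tendsto_finiteMoment (r : ℕ) :
    Tendsto (finiteMoment q r) atTop (𝓝 (tiltedMoment q r 1)) := by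
  have hsum : finiteMoment q r = fun d => ∑' i,
      (↑(range (d + 1)) : Set ℕ).indicator (fun i => (i : ℝ) ^ r * finiteMass q d i) i :=
    funext fun d => sum_eq_tsum_indicator _ _
  simp only [hsum, tiltedMoment, one_pow, mul_one]
  refine tendsto_tsum_of_dominated_convergence (summable_pow_mul_pow hq₀ hq₁ r) (fun i => ?_)
    (Eventually.of_forall fun d i => ?_)
  · have hfin : ∀ᶠ d in atTop, (i : ℝ) ^ r * (q ^ i * partialProd q i d) =
        (↑(range (d + 1)) : Set ℕ).indicator (fun i => (i : ℝ) ^ r * finiteMass q d i) i :=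
      (eventually_ge_atTop i).mono fun d hd => by
        rw [Set.indicator_of_mem (by simp; omega)]; rfl
    exact (((tendsto_partialProd hq₀ hq₁ i).const_mul _).const_mul _).congr' hfin
  · refine (norm_indicator_le_norm_self _ _).trans ?_
    rw [Real.norm_eq_abs,
      abs_of_nonneg (mul_nonneg (by positivity) (finiteMass_nonneg hq₀ hq₁ d i))]
    exact mul_le_mul_of_nonneg_left (finiteMass_le_pow hq₀ hq₁ d i) (by positivity)

lemma tsum_mul_pow_mul_limitMass (f : ℕ → ℝ)
    (h₁ : Summable fun j => f j * z ^ j * limitMass q j)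
    (h₂ : Summable fun j => f (j + 1) * z ^ j * limitMass q j)
    (h₃ : Summable fun j => f j * (q * z) ^ j * limitMass q j) :
    ∑' j, f j * z ^ j * limitMass q j =
      q * z * ∑' j, f (j + 1) * z ^ j * limitMass q j +
        ∑' j, f j * (q * z) ^ j * limitMass q j := by
  have hterm : ∀ j, f (j + 1) * z ^ (j + 1) * limitMass q (j + 1) =
      q * z * (f (j + 1) * z ^ j * limitMass q j) +
        f (j + 1) * (q * z) ^ (j + 1) * limitMass q (j + 1) := by
    intro j
    linear_combination (-(f (j + 1) * z ^ (j + 1))) * mul_limitMass hq₀ hq₁ j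
  rw [h₁.tsum_eq_zero_add, h₃.tsum_eq_zero_add, tsum_congr hterm,
    (h₂.mul_left (q * z)).tsum_add ((summable_nat_add_iff 1).2 h₃), tsum_mul_left]
  ring

variable (hz₀ : 0 ≤ z) (hz₁ : z ≤ 1)
include hz₀ hz₁

lemma summable_tiltedMoment (r : ℕ) : Summable fun j : ℕ => (j : ℝ) ^ r * z ^ j * limitMass q j :=
  (summable_pow_mul_pow hq₀ hq₁ r).of_nonneg_of_le
    (fun j => mul_nonneg (by positivity) (limitMass_nonneg hq₀ hq₁ j)) fun j => by
      rw [mul_assoc]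
      exact mul_le_mul_of_nonneg_left ((mul_le_of_le_one_left (limitMass_nonneg hq₀ hq₁ j)
        (pow_le_one₀ hz₀ hz₁)).trans (limitMass_le_pow hq₀ hq₁ j)) (by positivity)

lemma tiltedMoment_eq_mul_add (r : ℕ) :
    tiltedMoment q r z =
      q * z * ∑ m ∈ range (r + 1), (r.choose m : ℝ) * tiltedMoment q m z +
        tiltedMoment q r (q * z) := by
  have hqz₀ : 0 ≤ q * z := mul_nonneg hq₀ hz₀
  have hqz₁ : q * z ≤ 1 := mul_le_one₀ hq₁.le hz₀ hz₁
  have hexpand : ∀ j : ℕ, ((j + 1 : ℕ) : ℝ) ^ r * z ^ j * limitMass q j =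
      ∑ m ∈ range (r + 1), (r.choose m : ℝ) * ((j : ℝ) ^ m * z ^ j * limitMass q j) := by
    intro j
    rw [Nat.cast_succ, add_pow, sum_mul, sum_mul]
    exact sum_congr rfl fun m _ => by ring
  have hsum : ∀ m ∈ range (r + 1), Summable fun j : ℕ =>
      (r.choose m : ℝ) * ((j : ℝ) ^ m * z ^ j * limitMass q j) :=
    fun m _ => (summable_tiltedMoment hq₀ hq₁ hz₀ hz₁ m).mul_left _
  have h := tsum_mul_pow_mul_limitMass hq₀ hq₁ (fun j : ℕ => (j : ℝ) ^ r)
    (summable_tiltedMoment hq₀ hq₁ hz₀ hz₁ r) (by simpa only [hexpand] using summable_sum hsum)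
    (summable_tiltedMoment hq₀ hq₁ hqz₀ hqz₁ r)
  simpa only [hexpand, Summable.tsum_finsetSum hsum, tsum_mul_left, tiltedMoment] using h

end Moments

section Variance

noncomputable def tiltedVariance (q z : ℝ) : ℝ :=
  tiltedMoment q 2 z / tiltedMoment q 0 z - (tiltedMoment q 1 z / tiltedMoment q 0 z) ^ 2

variable {q : ℝ}

lemma tiltedMoment_at_zero (r : ℕ) : tiltedMoment q r 0 = 0 ^ r * limitMass q 0 := by
  rw [tiltedMoment, tsum_eq_single 0 fun j hj => by simp [zero_pow hj]]
  simp

variable (hq₀ : 0 ≤ q) (hq₁ : q < 1)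
include hq₀ hq₁

lemma tiltedMoment_zero_pos {z : ℝ} (hz₀ : 0 ≤ z) (hz₁ : z ≤ 1) : 0 < tiltedMoment q 0 z :=
  (summable_tiltedMoment hq₀ hq₁ hz₀ hz₁ 0).tsum_pos
    (fun j => mul_nonneg (by positivity) (limitMass_nonneg hq₀ hq₁ j)) 0
    (by simpa using limitMass_zero_pos hq₀ hq₁)

lemma tiltedVariance_eq_mul_add {z : ℝ} (hz₀ : 0 ≤ z) (hz₁ : z ≤ 1) :
    tiltedVariance q z =
      tiltedVariance q (q * z) + q * z / (1 - q * z) + (q * z / (1 - q * z)) ^ 2 := by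
  have h₀ := tiltedMoment_eq_mul_add hq₀ hq₁ hz₀ hz₁ 0
  have h₁ := tiltedMoment_eq_mul_add hq₀ hq₁ hz₀ hz₁ 1
  have h₂ := tiltedMoment_eq_mul_add hq₀ hq₁ hz₀ hz₁ 2
  norm_num [sum_range_succ] at h₀ h₁ h₂
  have hA := (tiltedMoment_zero_pos hq₀ hq₁ hz₀ hz₁).ne'
  have hs : 1 - q * z ≠ 0 := by nlinarith
  rw [tiltedVariance, tiltedVariance]
  set A := tiltedMoment q 0 z
  set B := tiltedMoment q 1 z
  set C := tiltedMoment q 2 z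
  have hA' : tiltedMoment q 0 (q * z) = (1 - q * z) * A := by linarith
  have hB' : tiltedMoment q 1 (q * z) = B - q * z * (A + B) := by linarith
  have hC' : tiltedMoment q 2 (q * z) = C - q * z * (A + 2 * B + C) := by linarith
  rw [hA', hB', hC']
  field_simp
  ring

lemma tendsto_tiltedMoment_pow (r : ℕ) :
    Tendsto (fun t => tiltedMoment q r (q ^ t)) atTop (𝓝 (tiltedMoment q r 0)) := by
  refine tendsto_tsum_of_dominated_convergence (summable_tiltedMoment hq₀ hq₁ zero_le_one le_rfl r)
    (fun j => (((tendsto_pow_atTop_nhds_zero_of_lt_one hq₀ hq₁).pow j).const_mul _).mul_const _)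
    (Eventually.of_forall fun t j => ?_)
  rw [Real.norm_eq_abs, one_pow,
    abs_of_nonneg (mul_nonneg (by positivity) (limitMass_nonneg hq₀ hq₁ j))]
  gcongr
  · exact limitMass_nonneg hq₀ hq₁ j
  · exact pow_le_one₀ (pow_nonneg hq₀ t) (pow_le_one₀ hq₀ hq₁.le)

lemma tendsto_tiltedVariance_pow : Tendsto (fun t => tiltedVariance q (q ^ t)) atTop (𝓝 0) := by
  have hA := (tiltedMoment_zero_pos hq₀ hq₁ le_rfl zero_le_one).ne'
  simpa [tiltedVariance, tiltedMoment_at_zero] using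
    ((tendsto_tiltedMoment_pow hq₀ hq₁ 2).div (tendsto_tiltedMoment_pow hq₀ hq₁ 0) hA).sub
      (((tendsto_tiltedMoment_pow hq₀ hq₁ 1).div (tendsto_tiltedMoment_pow hq₀ hq₁ 0) hA).pow 2)

lemma hasSum_tiltedVariance :
    HasSum (fun t => q ^ (t + 1) / (1 - q ^ (t + 1)) + (q ^ (t + 1) / (1 - q ^ (t + 1))) ^ 2)
      (tiltedVariance q 1) := by
  have hnonneg : ∀ t, 0 ≤ q ^ (t + 1) / (1 - q ^ (t + 1)) := fun t =>
    div_nonneg (pow_nonneg hq₀ _) (one_sub_pow_succ_pos hq₀ hq₁ t).le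
  have htelescope : ∀ t, q ^ (t + 1) / (1 - q ^ (t + 1)) + (q ^ (t + 1) / (1 - q ^ (t + 1))) ^ 2 =
      tiltedVariance q (q ^ t) - tiltedVariance q (q ^ (t + 1)) := fun t => by
    rw [tiltedVariance_eq_mul_add hq₀ hq₁ (pow_nonneg hq₀ t) (pow_le_one₀ hq₀ hq₁.le), ← pow_succ']
    ring
  rw [hasSum_iff_tendsto_nat_of_nonneg (fun t => add_nonneg (hnonneg t) (sq_nonneg _))]
  simp only [htelescope, sum_range_sub', pow_zero]
  simpa using (tendsto_tiltedVariance_pow hq₀ hq₁).const_sub (tiltedVariance q 1)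

lemma tiltedMoment_zero_one : tiltedMoment q 0 1 = 1 :=
  tendsto_nhds_unique (tendsto_finiteMoment hq₀ hq₁ 0)
    (tendsto_const_nhds.congr fun d => by simp [finiteMoment, sum_finiteMass])

lemma tendsto_finiteVariance :
    Tendsto (fun d => finiteMoment q 2 d - finiteMoment q 1 d ^ 2) atTop
      (𝓝 (tiltedVariance q 1)) := by
  rw [tiltedVariance, tiltedMoment_zero_one hq₀ hq₁, div_one, div_one]
  exact (tendsto_finiteMoment hq₀ hq₁ 2).sub ((tendsto_finiteMoment hq₀ hq₁ 1).pow 2)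

end Variance

lemma half_pow_succ_div_one_sub (t : ℕ) :
    (1 / 2 : ℝ) ^ (t + 1) / (1 - (1 / 2) ^ (t + 1)) = 1 / (2 ^ (t + 1) - 1) := by
  rw [one_div_pow, one_sub_div (by positivity), div_div_div_cancel_right₀ (by positivity)]

lemma tiltedVariance_half_one : tiltedVariance (1 / 2) 1 = c₀ + c₁ := by
  have h := hasSum_tiltedVariance (q := 1 / 2) (by norm_num) (by norm_num)
  simp only [half_pow_succ_div_one_sub] at h
  simp only [div_pow, one_pow] at h
  have hnonneg : ∀ t : ℕ, (0 : ℝ) ≤ 1 / (2 ^ (t + 1) - 1) := fun t => by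
    have : (1 : ℝ) ≤ 2 ^ (t + 1) := one_le_pow₀ one_le_two
    exact div_nonneg zero_le_one (by linarith)
  have h₀ : Summable fun t : ℕ => 1 / ((2 : ℝ) ^ (t + 1) - 1) :=
    h.summable.of_nonneg_of_le hnonneg fun t => le_add_of_nonneg_right (by positivity)
  have h₁ : Summable fun t : ℕ => 1 / ((2 : ℝ) ^ (t + 1) - 1) ^ 2 :=
    h.summable.of_nonneg_of_le (fun t => by positivity) fun t => le_add_of_nonneg_left (hnonneg t)
  rw [c₀, c₁, ← h₀.tsum_add h₁, h.tsum_eq]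

lemma finiteMass_half (d i : ℕ) :
    finiteMass (1 / 2) d i =
      (2 : ℝ) ^ (-(i : ℤ)) * ∏ j ∈ Icc (i + 1) d, (1 - (2 : ℝ) ^ (-(j : ℤ))) := by
  simp [finiteMass, partialProd, zpow_neg, inv_pow]

lemma E₁_eq_add_finiteMoment (k d : ℕ) : E₁ k d = k + finiteMoment (1 / 2) 1 d := by
  simp only [E₁, mul_assoc, ← finiteMass_half, add_mul, sum_add_distrib, ← mul_sum, sum_finiteMass,
    finiteMoment, pow_one, mul_one]

lemma E₂_eq_add_finiteMoment (k d : ℕ) :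
    E₂ k d = k ^ 2 + 2 * k * finiteMoment (1 / 2) 1 d + finiteMoment (1 / 2) 2 d := by
  simp only [E₂, mul_assoc, ← finiteMass_half, add_sq, add_mul, sum_add_distrib, ← mul_sum,
    sum_finiteMass, finiteMoment, pow_one, mul_one]

/-- `lim_{d→∞} (E₂(d) − E₁(d)²) = c₀ + c₁`: the limiting variance of the decoding
time of a random binary linear code. -/
theorem variance_decoding_time_limit (k : ℕ) :
    Tendsto (fun d : ℕ => E₂ k d - (E₁ k d) ^ 2) atTop (nhds (c₀ + c₁)) := by
  rw [← tiltedVariance_half_one]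
  refine (tendsto_finiteVariance (q := 1 / 2) (by norm_num) (by norm_num)).congr fun d => ?_
  rw [E₁_eq_add_finiteMoment, E₂_eq_add_finiteMoment]
  ring
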